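/- For every n ≥ 2 and every ℓ with 1 ≤ ℓ ≤ n−1, ∑_{k=ℓ+1}^{n} (−1)^(k+1) · choose(n, n−k) · choose(n+k−1, n−1) ≠ 1 (in ℤ); equivalently, Z(ℓ,n) ≠ n². -/

import Mathlib

open Finset

/-- `Z ℓ n = (−1)^ℓ (ℓ+1)² C(n, n−ℓ−1) C(n+ℓ, n−1)`, where the binomial coefficient
`C(n, n−ℓ−1)` is taken to be `0` when `ℓ ≥ n`. -/
def Z (ℓ n : ℕ) : ℤ :=
  (-1) ^ ℓ * ((ℓ : ℤ) + 1) ^ 2 *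
    (if ℓ + 1 ≤ n then (n.choose (n - ℓ - 1) : ℤ) else 0) *
    ((n + ℓ).choose (n - 1) : ℤ)

private lemma key (n ℓ : ℕ) (h : ℓ + 1 ≤ n) :
    ((n : ℤ)) ^ 2 * (n.choose (ℓ + 1) : ℤ) * ((n + ℓ).choose (n - 1) : ℤ)
      = ((ℓ : ℤ) + 1) ^ 2 * (n.choose (ℓ + 1) : ℤ) * ((n + ℓ).choose (n - 1) : ℤ)
        + ((ℓ : ℤ) + 2) ^ 2 * (n.choose (ℓ + 2) : ℤ) * ((n + ℓ + 1).choose (n - 1) : ℤ) := by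
  have h1 : n.choose (ℓ + 2) * (ℓ + 2) = n.choose (ℓ + 1) * (n - (ℓ + 1)) :=
    Nat.choose_succ_right_eq n (ℓ + 1)
  have h2 : (n + ℓ + 1) * (n + ℓ).choose (ℓ + 1) = (n + ℓ + 1).choose (ℓ + 2) * (ℓ + 2) :=
    Nat.add_one_mul_choose_eq (n + ℓ) (ℓ + 1)
  have e1 : (n + ℓ).choose (n - 1) = (n + ℓ).choose (ℓ + 1) := by
    have := Nat.choose_symm (n := n + ℓ) (k := n - 1) (by omega)
    rw [show n + ℓ - (n - 1) = ℓ + 1 by omega] at this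
    omega
  have e2 : (n + ℓ + 1).choose (n - 1) = (n + ℓ + 1).choose (ℓ + 2) := by
    have := Nat.choose_symm (n := n + ℓ + 1) (k := n - 1) (by omega)
    rw [show n + ℓ + 1 - (n - 1) = ℓ + 2 by omega] at this
    omega
  rw [e1, e2]
  have h1' : (n.choose (ℓ + 2) : ℤ) * ((ℓ : ℤ) + 2)
      = (n.choose (ℓ + 1) : ℤ) * ((n : ℤ) - (ℓ + 1)) := by
    have := congrArg (Nat.cast : ℕ → ℤ) h1
    push_cast [Nat.cast_sub h] at this
    linarith [this]
  have h2' : ((n : ℤ) + ℓ + 1) * ((n + ℓ).choose (ℓ + 1) : ℤ)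
      = ((n + ℓ + 1).choose (ℓ + 2) : ℤ) * ((ℓ : ℤ) + 2) := by
    exact_mod_cast congrArg (Nat.cast : ℕ → ℤ) h2
  linear_combination ((n.choose (ℓ + 1) : ℤ) * ((n : ℤ) - (ℓ + 1))) * h2'
    - (((ℓ : ℤ) + 2) * ((n + ℓ + 1).choose (ℓ + 2) : ℤ)) * h1'

private lemma n2_mul_sum (n : ℕ) : ∀ d ℓ, ℓ + d + 1 = n →
    (n : ℤ) ^ 2 * (∑ k ∈ Finset.Icc (ℓ + 1) n,
        (-1) ^ (k + 1) * (n.choose (n - k) : ℤ) * ((n + k - 1).choose (n - 1) : ℤ))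
      = Z ℓ n := by
  intro d
  induction d with
  | zero =>
      intro ℓ hℓ
      subst hℓ
      rw [Finset.Icc_self, Finset.sum_singleton]
      simp only [Z, Nat.sub_self, Nat.choose_zero_right,
        show ℓ + 1 + (ℓ + 0 + 1) - 1 = ℓ + 0 + 1 + ℓ by omega,
        show ℓ + 0 + 1 - ℓ - 1 = 0 by omega, if_pos (by omega : ℓ + 1 ≤ ℓ + 0 + 1)]
      push_cast
      ring
  | succ d ih =>
      intro ℓ hℓ
      have hsplit : Finset.Icc (ℓ + 1) n = insert (ℓ + 1) (Finset.Icc (ℓ + 2) n) := by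
        ext x; simp [Finset.mem_Icc]; omega
      rw [hsplit, Finset.sum_insert (by simp), mul_add, ih (ℓ + 1) (by omega)]
      have hA : n.choose (n - (ℓ + 1)) = n.choose (ℓ + 1) := Nat.choose_symm (by omega)
      have hB : n.choose (n - (ℓ + 1) - 1) = n.choose (ℓ + 2) := by
        rw [show n - (ℓ + 1) - 1 = n - (ℓ + 2) by omega]
        exact Nat.choose_symm (by omega)
      simp only [Z, if_pos (show ℓ + 1 ≤ n by omega), if_pos (show ℓ + 1 + 1 ≤ n by omega),
        show n + (ℓ + 1) - 1 = n + ℓ by omega, show n - (ℓ + 1) = n - ℓ - 1 from rfl,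
        show n + (ℓ + 1) = n + ℓ + 1 by omega]
      rw [show n - ℓ - 1 = n - (ℓ + 1) from rfl, hA,
        show n - (ℓ + 1) - 1 = n - (ℓ + 1) - 1 from rfl, hB]
      have hk := key n ℓ (by omega)
      push_cast
      linear_combination ((-1 : ℤ)) ^ ℓ * hk

private lemma Z_ne (n ℓ : ℕ) (hn : 2 ≤ n) (hℓ1 : 1 ≤ ℓ) (hℓ2 : ℓ ≤ n - 1) :
    Z ℓ n ≠ (n : ℤ) ^ 2 := by
  have hA : 1 ≤ (n.choose (n - ℓ - 1) : ℤ) := by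
    exact_mod_cast Nat.choose_pos (show n - ℓ - 1 ≤ n by omega)
  have hB : 0 ≤ ((n + ℓ).choose (n - 1) : ℤ) := by positivity
  rcases Nat.even_or_odd ℓ with he | ho
  · -- ℓ even, so ℓ ≥ 2
    have hℓ2' : 2 ≤ ℓ := by
      rcases he with ⟨m, hm⟩; omega
    -- 6 * C(m+2, 3) = m*(m+1)*(m+2)
    have c2 : ∀ m : ℕ, 2 * (m + 2).choose 2 = (m + 1) * (m + 2) := by
      intro m
      induction m with
      | zero => decide
      | succ m ih2 =>
          rw [show m + 1 + 2 = (m + 2) + 1 from rfl, Nat.choose_succ_succ,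
            Nat.choose_one_right, Nat.mul_add, ih2]
          ring
    have c3 : ∀ m : ℕ, 6 * (m + 2).choose 3 = m * (m + 1) * (m + 2) := by
      intro m
      induction m with
      | zero => decide
      | succ m ihm =>
          rw [show m + 1 + 2 = (m + 2) + 1 from rfl, Nat.choose_succ_succ, Nat.mul_add, ihm,
            show 6 * (m + 2).choose 2 = 3 * ((m + 1) * (m + 2)) by rw [← c2 m]; ring]
          ring
    have hBlow : (n + 2).choose (n - 1) ≤ (n + ℓ).choose (n - 1) :=
      Nat.choose_le_choose _ (by omega)
    have hsymm : (n + 2).choose (n - 1) = (n + 2).choose 3 := by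
      have := Nat.choose_symm (n := n + 2) (k := n - 1) (by omega)
      rw [show n + 2 - (n - 1) = 3 by omega] at this
      omega
    have hc3 := c3 (n - 2)
    rw [show n - 2 + 2 = n by omega] at hc3
    have hc3' := c3 n
    have hZ : Z ℓ n = ((ℓ : ℤ) + 1) ^ 2 * (n.choose (n - ℓ - 1) : ℤ)
        * ((n + ℓ).choose (n - 1) : ℤ) := by
      simp [Z, he.neg_one_pow, if_pos (show ℓ + 1 ≤ n by omega)]
      exact fun h => absurd h (by omega)
    have hBZ : ((n + 2).choose 3 : ℤ) ≤ ((n + ℓ).choose (n - 1) : ℤ) := by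
      rw [← hsymm]; exact_mod_cast hBlow
    have h9 : (9 : ℤ) ≤ ((ℓ : ℤ) + 1) ^ 2 := by nlinarith [(show (3:ℤ) ≤ (ℓ:ℤ) + 1 by exact_mod_cast by omega)]
    have h6 : (6 : ℤ) * ((n + 2).choose 3 : ℤ) = (n : ℤ) * (n + 1) * (n + 2) := by
      exact_mod_cast congrArg (Nat.cast : ℕ → ℤ) hc3'
    intro hcon
    rw [hZ] at hcon
    have hnpos : (2 : ℤ) ≤ (n : ℤ) := by exact_mod_cast hn
    nlinarith [mul_le_mul h9 (mul_le_mul hA hBZ (by positivity) (by linarith))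
        (by positivity) (by positivity)]
  · -- ℓ odd: Z ≤ 0 < n²
    have hZ : Z ℓ n = -(((ℓ : ℤ) + 1) ^ 2 * (n.choose (n - ℓ - 1) : ℤ)
        * ((n + ℓ).choose (n - 1) : ℤ)) := by
      simp [Z, ho.neg_one_pow, if_pos (show ℓ + 1 ≤ n by omega)]
      exact fun h => absurd h (by omega)
    intro hcon
    have : (0 : ℤ) < (n : ℤ) ^ 2 := by positivity
    nlinarith [hA, hB, mul_nonneg (mul_nonneg (by positivity : (0:ℤ) ≤ ((ℓ:ℤ)+1)^2) (by linarith : (0:ℤ) ≤ (n.choose (n-ℓ-1):ℤ))) hB]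

/-- For every `n ≥ 2` and every `ℓ` with `1 ≤ ℓ ≤ n − 1`,
`∑_{k=ℓ+1}^{n} (−1)^{k+1} C(n, n−k) C(n+k−1, n−1) ≠ 1` in `ℤ`; equivalently,
`Z(ℓ,n) ≠ n²`. -/
theorem sum_ne_one (n ℓ : ℕ) (hn : 2 ≤ n) (hℓ1 : 1 ≤ ℓ) (hℓ2 : ℓ ≤ n - 1) :
    (∑ k ∈ Finset.Icc (ℓ + 1) n,
        (-1) ^ (k + 1) * (n.choose (n - k) : ℤ) * ((n + k - 1).choose (n - 1) : ℤ)) ≠ 1 ∧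
      Z ℓ n ≠ (n : ℤ) ^ 2 := by
  have hz := Z_ne n ℓ hn hℓ1 hℓ2
  refine ⟨?_, hz⟩
  intro hcon
  have := n2_mul_sum n (n - 1 - ℓ) ℓ (by omega)
  rw [hcon, mul_one] at this
  exact hz this.symm
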